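/- Assume a_X > b_X > 0 and a_Y + b_Y > 0. Let x₁ = min{1/2, (b_Y − T_y·ln(a_X/b_X))/(a_Y + b_Y)}. Then L'(x) > 0 for every x ∈ (0, x₁). -/

import Mathlib

open Real Filter Set Topology

/-- QRE response of the second player. -/
noncomputable def qreY (aY bY Ty : ℝ) (x : ℝ) : ℝ :=
  (1 + Real.exp ((bY - (aY + bY) * x) / Ty))⁻¹

/-- QRE temperature curve for the first player. -/
noncomputable def qreTX (aX bX aY bY Ty : ℝ) (x : ℝ) : ℝ :=
  (bX - (aX + bX) * qreY aY bY Ty x) / Real.log (1 / x - 1)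

/-- The auxiliary function L(x) = y(x) + x(1-x) ln(1/x-1) y'(x). -/
noncomputable def qreL (aY bY Ty : ℝ) (x : ℝ) : ℝ :=
  qreY aY bY Ty x + x * (1 - x) * Real.log (1 / x - 1) * deriv (qreY aY bY Ty) x

/-! The response `y` is a logistic function of `x`, so `y' = k y (1 - y)` with
`k = (a_Y + b_Y)/T_y`. Differentiating `L = y + x(1-x) ln(1/x - 1) y'` and using
`d/dx ln(1/x - 1) = -1/(x(1-x))`, the term `y'` cancels and
`L' = ln(1/x - 1) · y' · ((1 - 2x) + x(1-x) k (1 - 2y))`.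
For `x < 1/2` the logarithm and `1 - 2x` are positive, and `x < x₁` forces `y(x) < 1/2`
(because `ln(a_X/b_X) > 0`), so every factor is positive. -/

theorem hasDerivAt_inv_one_add_exp {f : ℝ → ℝ} {f' x : ℝ} (hf : HasDerivAt f f' x) :
    HasDerivAt (fun t => (1 + exp (f t))⁻¹)
      (-f' * (1 + exp (f x))⁻¹ * (1 - (1 + exp (f x))⁻¹)) x := by
  have hpos : 0 < 1 + exp (f x) := by positivity
  refine ((hf.exp.const_add 1).inv hpos.ne').congr_deriv ?_
  field_simp
  ring

theorem hasDerivAt_log_one_div_sub_one {x : ℝ} (hx0 : 0 < x) (hx1 : x < 1) :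
    HasDerivAt (fun t => log (1 / t - 1)) (-(x * (1 - x))⁻¹) x := by
  have hinv : HasDerivAt (fun t => 1 / t - 1) (-(x ^ 2)⁻¹) x := by
    simpa only [one_div] using (hasDerivAt_inv hx0.ne').sub_const 1
  have hgt : 1 < 1 / x := by
    rw [lt_div_iff₀ hx0]
    linarith
  have h1x : 1 - x ≠ 0 := by linarith
  refine (hinv.log (by linarith)).congr_deriv ?_
  field_simp

theorem log_one_div_sub_one_pos {x : ℝ} (hx0 : 0 < x) (hx : x < 1 / 2) : 0 < log (1 / x - 1) :=
  log_pos <| by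
    rw [lt_sub_iff_add_lt, lt_div_iff₀ hx0]
    linarith

theorem hasDerivAt_add_log_mul_logistic {y : ℝ → ℝ} {k x : ℝ} (hx0 : 0 < x) (hx1 : x < 1)
    (hy : HasDerivAt y (k * y x * (1 - y x)) x) :
    HasDerivAt (fun t => y t + t * (1 - t) * log (1 / t - 1) * (k * y t * (1 - y t)))
      (log (1 / x - 1) * (k * y x * (1 - y x)) * ((1 - 2 * x) + x * (1 - x) * k * (1 - 2 * y x)))
      x := by
  have hpoly : HasDerivAt (fun t : ℝ => t * (1 - t)) (1 - 2 * x) x := by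
    refine ((hasDerivAt_id' x).mul ((hasDerivAt_id' x).const_sub 1)).congr_deriv ?_
    ring
  have hy' : HasDerivAt (fun t => k * y t * (1 - y t))
      (k * (k * y x * (1 - y x)) * (1 - y x) + k * y x * -(k * y x * (1 - y x))) x :=
    (hy.const_mul k).mul (hy.const_sub 1)
  refine (hy.add ((hpoly.mul (hasDerivAt_log_one_div_sub_one hx0 hx1)).mul hy')).congr_deriv ?_
  have hx : x ≠ 0 := hx0.ne'
  have h1x : 1 - x ≠ 0 := by linarith
  simp only [Pi.mul_apply]
  field_simp
  ring

section QRE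

variable (aY bY Ty : ℝ)

theorem hasDerivAt_qreY (x : ℝ) :
    HasDerivAt (qreY aY bY Ty)
      ((aY + bY) / Ty * qreY aY bY Ty x * (1 - qreY aY bY Ty x)) x := by
  have hu : HasDerivAt (fun t => (bY - (aY + bY) * t) / Ty) (-((aY + bY) / Ty)) x := by
    refine ((((hasDerivAt_id' x).const_mul (aY + bY)).const_sub bY).div_const Ty).congr_deriv ?_
    ring
  rw [← neg_neg ((aY + bY) / Ty)]
  exact hasDerivAt_inv_one_add_exp hu

theorem deriv_qreY :
    deriv (qreY aY bY Ty) = fun x => (aY + bY) / Ty * qreY aY bY Ty x * (1 - qreY aY bY Ty x) :=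
  funext fun x => (hasDerivAt_qreY aY bY Ty x).deriv

theorem qreY_pos (x : ℝ) : 0 < qreY aY bY Ty x := by
  unfold qreY
  positivity

theorem qreY_lt_one (x : ℝ) : qreY aY bY Ty x < 1 :=
  inv_lt_one_of_one_lt₀ (lt_add_of_pos_right 1 (exp_pos _))

variable {aY bY Ty}

theorem deriv_qreY_pos (hTy : 0 < Ty) (hY : 0 < aY + bY) (x : ℝ) :
    0 < deriv (qreY aY bY Ty) x := by
  have hy0 := qreY_pos aY bY Ty x
  have hy1 : 0 < 1 - qreY aY bY Ty x := sub_pos.mpr (qreY_lt_one aY bY Ty x)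
  rw [deriv_qreY]
  positivity

theorem qreY_lt_half (hTy : 0 < Ty) {x : ℝ} (hx : (aY + bY) * x < bY) :
    qreY aY bY Ty x < 1 / 2 := by
  have hE : 1 < exp ((bY - (aY + bY) * x) / Ty) :=
    one_lt_exp_iff.mpr (div_pos (by linarith) hTy)
  rw [qreY, one_div]
  exact inv_strictAnti₀ two_pos (by linarith)

theorem hasDerivAt_qreL {x : ℝ} (hx0 : 0 < x) (hx1 : x < 1) :
    HasDerivAt (qreL aY bY Ty)
      (log (1 / x - 1) * deriv (qreY aY bY Ty) x *
        ((1 - 2 * x) + x * (1 - x) * ((aY + bY) / Ty) * (1 - 2 * qreY aY bY Ty x))) x := by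
  have hL : qreL aY bY Ty = fun t => qreY aY bY Ty t + t * (1 - t) * log (1 / t - 1) *
      ((aY + bY) / Ty * qreY aY bY Ty t * (1 - qreY aY bY Ty t)) := by
    funext t
    rw [qreL, deriv_qreY]
  rw [hL, deriv_qreY]
  exact hasDerivAt_add_log_mul_logistic hx0 hx1 (hasDerivAt_qreY aY bY Ty x)

end QRE

theorem stmt_7 (aX bX aY bY Ty : ℝ) (hTy : 0 < Ty)
    (hab : aX > bX) (hbX : bX > 0) (hY : aY + bY > 0) :
    ∀ x ∈ Set.Ioo (0:ℝ) (min (1/2 : ℝ) ((bY - Ty * Real.log (aX / bX)) / (aY + bY))),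
      0 < deriv (qreL aY bY Ty) x := by
  rintro x ⟨hx0, hx⟩
  have hx_half : x < 1 / 2 := hx.trans_le (min_le_left _ _)
  have hx_bY : (aY + bY) * x < bY := by
    have hlog : 0 < Ty * log (aX / bX) := mul_pos hTy (log_pos ((one_lt_div hbX).mpr hab))
    have := (lt_div_iff₀' hY).mp (hx.trans_le (min_le_right _ _))
    linarith
  have h1x : 0 < 1 - x := by linarith
  have h2x : 0 < 1 - 2 * x := by linarith
  have h2y : 0 < 1 - 2 * qreY aY bY Ty x := by linarith [qreY_lt_half hTy hx_bY]
  rw [(hasDerivAt_qreL hx0 (by linarith)).deriv]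
  exact mul_pos (mul_pos (log_one_div_sub_one_pos hx0 hx_half) (deriv_qreY_pos hTy hY x))
    (by positivity)
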